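/- Let C, D be nonempty closed subsets of a complete partial b-metric space (O, δ, s) with C ∩ D ≠ ∅, and let h, η be self-maps on C ∪ D with h(C) ⊆ D and η(D) ⊆ C. Suppose there exist ξ continuous nondecreasing with ξ⁻¹(0)={0}, ω continuous with ω(s_n)→0 implying s_n→0, and a C-class function H such that for all w ∈ C and v ∈ D: ξ(s³ δ(hw, ηv)) ≤ H(ξ(N(w,v)), ω(N(w,v))), where N(w,v) = max{δ(w,v), δ(hw,w), δ(v,ηv), (δ(w,ηv)+δ(hw,v))/(2s)}. Then h and η have a unique common fixed point, which lies in C ∩ D. -/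

import Mathlib

open Filter Topology Set NNReal

/-- A partial b-metric on `O` with coefficient `s`. -/
structure IsPartialBMetric {O : Type*} (d : O → O → ℝ) (s : ℝ) : Prop where
  one_le : 1 ≤ s
  nonneg : ∀ w z, 0 ≤ d w z
  eq_iff : ∀ w z, w = z ↔ d w w = d w z ∧ d w z = d z z
  self_le : ∀ w z, d w w ≤ d w z
  symm : ∀ w z, d w z = d z w
  triangle : ∀ w z t, d w z ≤ s * (d w t + d t z) - d t t

/-- Convergence of a sequence in a partial b-metric space. -/
def PBConv {O : Type*} (d : O → O → ℝ) (v : ℕ → O) (x : O) : Prop :=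
  Tendsto (fun m => d (v m) x) atTop (𝓝 (d x x))

/-- Cauchy sequence in a partial b-metric space. -/
def PBCauchy {O : Type*} (d : O → O → ℝ) (v : ℕ → O) : Prop :=
  ∃ L : ℝ, Tendsto (fun p : ℕ × ℕ => d (v p.1) (v p.2)) atTop (𝓝 L)

/-- Completeness of a partial b-metric space. -/
def PBComplete {O : Type*} (d : O → O → ℝ) : Prop :=
  ∀ v : ℕ → O, PBCauchy d v → ∃ x : O,
    Tendsto (fun p : ℕ × ℕ => d (v p.1) (v p.2)) atTop (𝓝 (d x x)) ∧ PBConv d v x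

/-- A partially b-closed subset (sequentially closed). -/
def PBClosed {O : Type*} (d : O → O → ℝ) (A : Set O) : Prop :=
  ∀ x : O, (∃ v : ℕ → O, (∀ n, v n ∈ A) ∧ PBConv d v x) → x ∈ A

/-- C-class function (on the nonnegative quadrant). -/
def CClassFun (H : ℝ → ℝ → ℝ) : Prop :=
  ContinuousOn (fun p : ℝ × ℝ => H p.1 p.2) {p : ℝ × ℝ | 0 ≤ p.1 ∧ 0 ≤ p.2} ∧
  (∀ t z, 0 ≤ t → 0 ≤ z → 0 ≤ H t z ∧ H t z ≤ t) ∧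
  (∀ t z, 0 ≤ t → 0 ≤ z → H t z = t → t = 0 ∨ z = 0)

/-- The quantity N(w,z) used in generalized TAC contractions. -/
noncomputable def PBN {O : Type*} (d : O → O → ℝ) (s : ℝ) (h η Q Z : O → O)
    (w z : O) : ℝ :=
  max (max (d (Q w) (Z z)) (d (h w) (Q w)))
      (max (d (Z z) (η z)) ((d (Q w) (η z) + d (h w) (Z z)) / (2 * s)))

/-!
The contractive condition enters only through the relation `ξ t ≤ H (ξ N) (ω N)` between
`t = s ^ 3 * d (h w) (η v)` and `N = N(w, v)`. The C-class axioms make it strict (`t < N` for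
`N > 0`), and continuity turns this into a uniform gap `t + c ≤ N` for `N` in any compact
`[a, b] ⊂ (0, ∞)`. Along the alternating orbit `x₀, h x₀, η (h x₀), …` this gives
`s ^ 3 * δₙ₊₁ ≤ δₙ` for consecutive distances, hence `δₙ → 0`; the gap then keeps the even orbit
within `ε` of a late point `x₂ₖ` (the factor `s ^ 3` absorbs the constants of the b-triangle
inequality), so it is Cauchy. Its limit `z` lies in `C ∩ D` by closedness, the gap at
`N = d (h z) z` forces `h z = z` (and symmetrically `η z = z`), and strictness at `N = d p q`
gives uniqueness.
-/


namespace IsPartialBMetric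

variable {O : Type*} {d : O → O → ℝ} {s : ℝ}

theorem dist_le_mul_add (pb : IsPartialBMetric d s) (w t z : O) :
    d w z ≤ s * (d w t + d t z) := by
  linarith [pb.triangle w z t, pb.nonneg t t]

theorem eq_of_dist_eq_zero (pb : IsPartialBMetric d s) {w z : O} (h : d w z = 0) : w = z := by
  have hww : d w w = 0 := le_antisymm (h ▸ pb.self_le w z) (pb.nonneg w w)
  have hzz : d z z = 0 := le_antisymm (h ▸ pb.symm w z ▸ pb.self_le z w) (pb.nonneg z z)
  exact (pb.eq_iff w z).2 ⟨by rw [hww, h], by rw [h, hzz]⟩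

theorem tendsto_dist_trans (pb : IsPartialBMetric d s) {a b c : ℕ → O}
    (hab : Tendsto (fun n => d (a n) (b n)) atTop (𝓝 0))
    (hbc : Tendsto (fun n => d (b n) (c n)) atTop (𝓝 0)) :
    Tendsto (fun n => d (a n) (c n)) atTop (𝓝 0) := by
  refine squeeze_zero (fun n => pb.nonneg _ _) (fun n => pb.dist_le_mul_add _ (b n) _) ?_
  simpa using (hab.add hbc).const_mul s

theorem tendsto_dist_prod_of_forall (pb : IsPartialBMetric d s) {y : ℕ → O}
    (hy : ∀ ε > 0, ∃ K, ∀ n ≥ K, d (y K) (y n) < ε) :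
    Tendsto (fun p : ℕ × ℕ => d (y p.1) (y p.2)) atTop (𝓝 0) := by
  have hs0 : 0 < s := by linarith [pb.one_le]
  refine tendsto_order.2 ⟨fun a ha => Eventually.of_forall fun p => ha.trans_le (pb.nonneg _ _),
    fun a ha => ?_⟩
  obtain ⟨K, hK⟩ := hy (a / (2 * s)) (by positivity)
  refine eventually_atTop.2 ⟨(K, K), fun p hp => (pb.dist_le_mul_add _ (y K) _).trans_lt ?_⟩
  have h1 := hK p.1 hp.1
  have h2 := hK p.2 hp.2
  rw [pb.symm] at h1
  calc s * (d (y p.1) (y K) + d (y K) (y p.2)) < s * (a / (2 * s) + a / (2 * s)) := by gcongr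
    _ = a := by field_simp; ring

end IsPartialBMetric

section PBN

variable {O : Type*} {d : O → O → ℝ} {s : ℝ}

theorem PBN_swap (hd : ∀ w z, d w z = d z w)
    (f g : O → O) (w v : O) :
    PBN d s g f id id v w = PBN d s f g id id w v := by
  simp only [PBN, id_eq, hd v w, hd (g v) w, hd v (f w), hd (g v) v, hd (f w) w,
    add_comm (d (f w) v)]
  ac_rfl

theorem PBN_apply_le_max (pb : IsPartialBMetric d s) (f g : O → O) (w : O) :
    PBN d s f g id id w (f w) ≤ max (d w (f w)) (d (f w) (g (f w))) := by
  have hs : 0 < s := by linarith [pb.one_le]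
  simp only [PBN, id_eq]
  refine max_le (max_le (le_max_left _ _) (pb.symm (f w) w ▸ le_max_left _ _))
    (max_le (le_max_right _ _) ((div_le_iff₀ (by positivity)).2 ?_))
  have hsum : d w (f w) + d (f w) (g (f w)) ≤ 2 * max (d w (f w)) (d (f w) (g (f w))) := by
    linarith [le_max_left (d w (f w)) (d (f w) (g (f w))),
      le_max_right (d w (f w)) (d (f w) (g (f w)))]
  nlinarith [pb.triangle w (g (f w)) (f w), mul_le_mul_of_nonneg_left hsum hs.le]

theorem PBN_le_of_dist_lt (pb : IsPartialBMetric d s) (f g : O → O) {w u v : O} {ε θ : ℝ}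
    (hwu : d w u < ε) (hw : d w (f w) < θ) (huv : d u v < θ) (hv : d v (g v) < θ) :
    PBN d s f g id id w v ≤ s * ε + 3 * s * θ := by
  have hs := pb.one_le
  have hs0 : 0 ≤ s := by linarith
  have hε : 0 ≤ ε := (pb.nonneg w u).trans hwu.le
  have hθ : 0 ≤ θ := (pb.nonneg w (f w)).trans hw.le
  have hwv : d w v ≤ s * (ε + θ) :=
    (pb.dist_le_mul_add w u v).trans (mul_le_mul_of_nonneg_left (by linarith) hs0)
  have hugv : d u (g v) ≤ s * (2 * θ) :=
    (pb.dist_le_mul_add u v (g v)).trans (mul_le_mul_of_nonneg_left (by linarith) hs0)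
  have hwgv : d w (g v) ≤ s * (ε + s * (2 * θ)) :=
    (pb.dist_le_mul_add w u (g v)).trans (mul_le_mul_of_nonneg_left (by linarith) hs0)
  have hfwv : d (f w) v ≤ s * (θ + s * (ε + θ)) :=
    (pb.dist_le_mul_add (f w) w v).trans
      (mul_le_mul_of_nonneg_left (by linarith [pb.symm w (f w)]) hs0)
  simp only [PBN, id_eq]
  refine max_le (max_le ?_ ?_) (max_le ?_ ((div_le_iff₀ (by linarith)).2 ?_))
  · nlinarith
  · nlinarith [pb.symm w (f w)]
  · nlinarith
  · nlinarith [mul_le_mul_of_nonneg_right hs hε, mul_le_mul_of_nonneg_right hs hθ]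

theorem PBN_eq_dist_left (pb : IsPartialBMetric d s) (f g : O → O) {z v : O}
    (hzv : d z v ≤ d (f z) z) (hv : d v (g v) ≤ d (f z) z)
    (hsum : d z (g v) + s * d z v ≤ s * d (f z) z) :
    PBN d s f g id id z v = d (f z) z := by
  have hs0 : 0 < s := by linarith [pb.one_le]
  simp only [PBN, id_eq]
  refine le_antisymm (max_le (max_le hzv le_rfl) (max_le hv ((div_le_iff₀ (by positivity)).2 ?_)))
    (le_max_of_le_left (le_max_right _ _))
  linarith [pb.dist_le_mul_add (f z) z v]

end PBN

structure IsStrictComparison (R : ℝ → ℝ → Prop) : Prop where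
  le : ∀ ⦃t N : ℝ⦄, 0 ≤ t → 0 ≤ N → R t N → t ≤ N
  exists_gap : ∀ ⦃a : ℝ⦄, 0 < a → ∀ b, ∃ c > 0, ∀ N ∈ Icc a b, ∀ t, 0 ≤ t → R t N → t + c ≤ N

theorem IsStrictComparison.lt {R : ℝ → ℝ → Prop} (hR : IsStrictComparison R) {t N : ℝ}
    (ht : 0 ≤ t) (hN : 0 < N) (h : R t N) : t < N := by
  obtain ⟨c, hc, hgap⟩ := hR.exists_gap hN N
  linarith [hgap N ⟨le_rfl, le_rfl⟩ t ht h]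

/-- The gap `N - t` attains a positive minimum on the compact set of pairs
`(N, t) ∈ [a, b] × [0, b]` with `ξ t ≤ φ N`. -/
theorem exists_gap_of_continuousOn {ξ φ : ℝ → ℝ} (hξ : ContinuousOn ξ (Ici 0))
    (hφ : ContinuousOn φ (Ici 0)) (hlt : ∀ t N, 0 ≤ t → 0 < N → ξ t ≤ φ N → t < N)
    {a : ℝ} (ha : 0 < a) (b : ℝ) :
    ∃ c > 0, ∀ N ∈ Icc a b, ∀ t, 0 ≤ t → ξ t ≤ φ N → t + c ≤ N := by
  set S := (Icc a b ×ˢ Icc 0 b) ∩ (fun p : ℝ × ℝ => (ξ p.2, φ p.1)) ⁻¹' {q | q.1 ≤ q.2}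
  have hS : IsCompact S := by
    refine (isCompact_Icc.prod isCompact_Icc).of_isClosed_subset ?_ inter_subset_left
    refine ContinuousOn.preimage_isClosed_of_isClosed ?_ (isClosed_Icc.prod isClosed_Icc)
      (isClosed_le continuous_fst continuous_snd)
    exact (hξ.comp continuousOn_snd fun p hp => hp.2.1).prodMk
      (hφ.comp continuousOn_fst fun p hp => ha.le.trans hp.1.1)
  have mem : ∀ N ∈ Icc a b, ∀ t, 0 ≤ t → ξ t ≤ φ N → (N, t) ∈ S := fun N hN t ht h =>
    ⟨⟨hN, ht, (hlt t N ht (ha.trans_le hN.1) h).le.trans hN.2⟩, h⟩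
  rcases S.eq_empty_or_nonempty with hSe | hSne
  · exact ⟨1, one_pos, fun N hN t ht h => absurd (mem N hN t ht h) (hSe ▸ notMem_empty _)⟩
  obtain ⟨p, hp, hmin⟩ :=
    hS.exists_isMinOn (f := fun p : ℝ × ℝ => p.1 - p.2) hSne (by fun_prop)
  refine ⟨p.1 - p.2, sub_pos.2 (hlt _ _ hp.1.2.1 (ha.trans_le hp.1.1.1) hp.2),
    fun N hN t ht h => ?_⟩
  linarith [isMinOn_iff.1 hmin _ (mem N hN t ht h)]

theorem isStrictComparison_cClass {ξ ω : ℝ → ℝ} {Hc : ℝ → ℝ → ℝ}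
    (hξc : ContinuousOn ξ (Ici 0)) (hξm : MonotoneOn ξ (Ici 0))
    (hξnn : ∀ t, 0 ≤ t → 0 ≤ ξ t) (hξ0 : ∀ t, 0 ≤ t → (ξ t = 0 ↔ t = 0))
    (hωc : ContinuousOn ω (Ici 0)) (hωnn : ∀ t, 0 ≤ t → 0 ≤ ω t)
    (hω0 : ∀ t, 0 ≤ t → ω t = 0 → t = 0) (hH : CClassFun Hc) :
    IsStrictComparison fun t N => ξ t ≤ Hc (ξ N) (ω N) := by
  have H_le : ∀ N, 0 ≤ N → Hc (ξ N) (ω N) ≤ ξ N := fun N hN =>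
    (hH.2.1 _ _ (hξnn N hN) (hωnn N hN)).2
  have eq_zero : ∀ N, 0 ≤ N → ξ N ≤ Hc (ξ N) (ω N) → N = 0 := fun N hN h =>
    (hH.2.2 _ _ (hξnn N hN) (hωnn N hN) (le_antisymm (H_le N hN) h)).elim
      ((hξ0 N hN).1) (hω0 N hN)
  have lt : ∀ t N, 0 ≤ t → 0 < N → ξ t ≤ Hc (ξ N) (ω N) → t < N := by
    intro t N ht hN h
    by_contra! hNt
    exact hN.ne' <| eq_zero N hN.le <| (hξm hN.le ht hNt).trans h
  refine ⟨fun t N ht hN h => ?_, fun a ha b => exists_gap_of_continuousOn hξc ?_ lt ha b⟩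
  · rcases hN.eq_or_lt with rfl | hN
    · have hξ00 : ξ 0 = 0 := (hξ0 0 le_rfl).2 rfl
      have : ξ t = 0 := le_antisymm (hξ00 ▸ h.trans (H_le 0 le_rfl)) (hξnn t ht)
      exact ((hξ0 t ht).1 this).le
    · exact (lt t N ht hN h).le
  · exact hH.1.comp (hξc.prodMk hωc) fun N hN => ⟨hξnn N hN, hωnn N hN⟩

theorem mul_le_of_isStrictComparison {R : ℝ → ℝ → Prop} (hR : IsStrictComparison R)
    {K a b M : ℝ} (hK : 1 ≤ K) (ha : 0 ≤ a) (hb : 0 ≤ b) (haM : a ≤ M) (hMb : M ≤ max b a)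
    (h : R (K * a) M) : K * a ≤ b := by
  have haK : a ≤ K * a := le_mul_of_one_le_left ha hK
  rcases (ha.trans haM).eq_or_lt with hM | hM
  · nlinarith
  have hlt := hR.lt (ha.trans haK) hM h
  rcases le_max_iff.1 hMb with hle | hle <;> linarith

theorem tendsto_zero_of_isStrictComparison {R : ℝ → ℝ → Prop} (hR : IsStrictComparison R)
    {K : ℝ} (hK : 1 ≤ K) {δ : ℕ → ℝ} (hδ : ∀ n, 0 ≤ δ n)
    (hstep : ∀ n, ∃ M, δ (n + 1) ≤ M ∧ M ≤ max (δ n) (δ (n + 1)) ∧ R (K * δ (n + 1)) M) :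
    Tendsto δ atTop (𝓝 0) := by
  choose M hlow hup hrel using hstep
  have hKδ : ∀ n, δ n ≤ K * δ n := fun n => le_mul_of_one_le_left (hδ n) hK
  have hanti : Antitone δ := antitone_nat_of_succ_le fun n => (hKδ _).trans <|
    mul_le_of_isStrictComparison hR hK (hδ _) (hδ n) (hlow n) (max_comm (δ n) _ ▸ hup n) (hrel n)
  have hbdd : BddBelow (range δ) := ⟨0, forall_mem_range.2 hδ⟩
  have hlim : Tendsto δ atTop (𝓝 (⨅ n, δ n)) := tendsto_atTop_ciInf hanti hbdd
  rcases (le_ciInf hδ).eq_or_lt with h0 | hpos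
  · rwa [← h0] at hlim
  obtain ⟨c, hc, hgap⟩ := hR.exists_gap hpos (δ 0)
  have hdrop : ∀ n, δ (n + 1) + c ≤ δ n := fun n => by
    have hMmem : M n ∈ Icc (⨅ n, δ n) (δ 0) :=
      ⟨(ciInf_le hbdd _).trans (hlow n),
        (hup n).trans (max_le (hanti n.zero_le) (hanti (n + 1).zero_le))⟩
    have := hgap _ hMmem _ ((hδ _).trans (hKδ _)) (hrel n)
    linarith [hKδ (n + 1), hup n, max_eq_left (hanti n.le_succ)]
  have := le_of_tendsto_of_tendsto' ((hlim.comp (tendsto_add_atTop_nat 1)).add_const c) hlim hdrop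
  linarith

section Contraction

variable {O : Type*} {d : O → O → ℝ} {s : ℝ} {R : ℝ → ℝ → Prop} {A B : Set O} {f g : O → O}

def IsCyclicContraction (d : O → O → ℝ) (s : ℝ) (R : ℝ → ℝ → Prop) (A B : Set O)
    (f g : O → O) : Prop :=
  ∀ w ∈ A, ∀ v ∈ B, R (s ^ 3 * d (f w) (g v)) (PBN d s f g id id w v)

theorem IsCyclicContraction.symm (hd : ∀ w z, d w z = d z w)
    (hc : IsCyclicContraction d s R A B f g) : IsCyclicContraction d s R B A g f :=
  fun v hv w hw => by
    rw [PBN_swap hd, hd (g v) (f w)]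
    exact hc w hw v hv

theorem IsCyclicContraction.exists_step (pb : IsPartialBMetric d s)
    (hc : IsCyclicContraction d s R A B f g) {w : O} (hw : w ∈ A) (hfw : f w ∈ B) :
    ∃ M, d (f w) (g (f w)) ≤ M ∧ M ≤ max (d w (f w)) (d (f w) (g (f w))) ∧
      R (s ^ 3 * d (f w) (g (f w))) M :=
  ⟨_, le_max_of_le_right (le_max_left _ _), PBN_apply_le_max pb f g w, hc w hw (f w) hfw⟩

theorem IsCyclicContraction.isFixedPt_of_tendsto (pb : IsPartialBMetric d s)
    (hR : IsStrictComparison R) (hc : IsCyclicContraction d s R A B f g) {z : O} (hz : z ∈ A)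
    {u : ℕ → O} (hu : ∀ n, u n ∈ B) (hlim : Tendsto (fun n => d (u n) z) atTop (𝓝 0))
    (hglim : Tendsto (fun n => d (g (u n)) z) atTop (𝓝 0)) : f z = z := by
  by_contra hne
  set t := d (f z) z
  have ht : 0 < t := (pb.nonneg _ _).lt_of_ne fun h => hne (pb.eq_of_dist_eq_zero h.symm)
  have hs0 : 0 < s := by linarith [pb.one_le]
  have hzu : Tendsto (fun n => d z (u n)) atTop (𝓝 0) := hlim.congr fun n => pb.symm _ _
  have hzgu : Tendsto (fun n => d z (g (u n))) atTop (𝓝 0) := hglim.congr fun n => pb.symm _ _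
  have hugu := pb.tendsto_dist_trans hlim hzgu
  have hsum : Tendsto (fun n => d z (g (u n)) + s * d z (u n)) atTop (𝓝 0) := by
    simpa using hzgu.add (hzu.const_mul s)
  have hN : ∀ᶠ n in atTop, PBN d s f g id id z (u n) = t := by
    filter_upwards [hzu.eventually (gt_mem_nhds ht), hugu.eventually (gt_mem_nhds ht),
      hsum.eventually (gt_mem_nhds (mul_pos hs0 ht))] with n h1 h2 h3
    exact PBN_eq_dist_left pb f g h1.le h2.le h3.le
  obtain ⟨c, hc0, hgap⟩ := hR.exists_gap ht t
  have hglim' : Tendsto (fun n => s ^ 3 * d (g (u n)) z) atTop (𝓝 0) := by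
    simpa using hglim.const_mul (s ^ 3)
  have hclose := hglim'.eventually (gt_mem_nhds hc0)
  obtain ⟨n, hNn, hn⟩ := (hN.and hclose).exists
  have hrel := hc z hz (u n) (hu n)
  rw [hNn] at hrel
  have hdrop := hgap t ⟨le_rfl, le_rfl⟩ _ (mul_nonneg (by positivity) (pb.nonneg _ _)) hrel
  -- the triangle inequality through `g (u n)`, scaled by `s ^ 2`, forces `s ^ 2 * t < t`
  have htri := mul_le_mul_of_nonneg_left (pb.dist_le_mul_add (f z) (g (u n)) z) (sq_nonneg s)
  have hst : t ≤ s ^ 2 * t := le_mul_of_one_le_left ht.le (one_le_pow₀ pb.one_le)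
  nlinarith

theorem IsCyclicContraction.dist_lt_of_gap (pb : IsPartialBMetric d s)
    (hR : IsStrictComparison R) (hc : IsCyclicContraction d s R A B f g) {ε θ c : ℝ}
    (hε : 0 < ε) (hθε : 4 * s * θ ≤ ε) (hθc : 2 * (s ^ 3 + 3 * s) * θ ≤ c)
    (hgap : ∀ N ∈ Icc (ε / 2) (s * ε + 3 * s * ε), ∀ t, 0 ≤ t → R t N → t + c ≤ N)
    {w u v : O} (hwA : w ∈ A) (hvB : v ∈ B) (hwu : d w u < ε) (hw : d w (f w) < θ)
    (huv : d u v < θ) (hv : d v (g v) < θ) : d w (g v) < ε := by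
  have hs := pb.one_le
  have hs0 : 0 < s := by linarith
  have hθ0 : 0 < θ := (pb.nonneg _ _).trans_lt hw
  have hN := PBN_le_of_dist_lt pb f g hwu hw huv hv
  have hrel := hc w hwA v hvB
  set N := PBN d s f g id id w v
  set t := d (f w) (g v)
  have ht : 0 ≤ t := pb.nonneg _ _
  have hN0 : 0 ≤ N := (pb.nonneg _ _).trans (le_max_left _ _ |>.trans (le_max_left _ _))
  have hst : s * t ≤ s ^ 3 * t :=
    calc s * t ≤ s ^ 2 * (s * t) := le_mul_of_one_le_left (by positivity) (one_le_pow₀ hs)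
      _ = s ^ 3 * t := by ring
  have hsw : s * d w (f w) < s * θ := mul_lt_mul_of_pos_left hw hs0
  refine (pb.dist_le_mul_add w (f w) _).trans_lt ?_
  rcases lt_or_ge N (ε / 2) with hsmall | hlarge
  · linarith [hR.le (by positivity) hN0 hrel]
  · have hdrop := hgap N ⟨hlarge, hN.trans (by nlinarith)⟩ _ (by positivity) hrel
    have hsw3 : s ^ 3 * d w (f w) < s ^ 3 * θ := mul_lt_mul_of_pos_left hw (by positivity)
    have hsε : s * ε ≤ s ^ 2 * ε :=
      mul_le_mul_of_nonneg_right (le_self_pow₀ hs two_ne_zero) hε.le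
    have hθs : 0 ≤ (s ^ 3 + 3 * s) * θ := by positivity
    have key : s ^ 2 * (s * (d w (f w) + t)) < s ^ 2 * ε := by linarith
    exact lt_of_mul_lt_mul_left key (sq_nonneg s)

theorem IsCyclicContraction.eq_of_isFixedPt (pb : IsPartialBMetric d s)
    (hR : IsStrictComparison R) (hc : IsCyclicContraction d s R A B f g) {p q : O} (hp : p ∈ A)
    (hq : q ∈ B) (hfp : f p = p) (hgq : g q = q) : p = q := by
  refine pb.eq_of_dist_eq_zero (le_antisymm ?_ (pb.nonneg p q))
  by_contra! hpos
  have hs := pb.one_le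
  have hN : PBN d s f g id id p q = d p q := by
    simp only [PBN, id_eq, hfp, hgq]
    refine le_antisymm (max_le (max_le le_rfl (pb.self_le p q))
      (max_le (pb.symm q p ▸ pb.self_le q p) ((div_le_iff₀ (by positivity)).2 ?_)))
      (le_max_of_le_left (le_max_left _ _))
    nlinarith
  have hrel := hc p hp q hq
  rw [hN, hfp, hgq] at hrel
  have := hR.lt (by positivity) hpos hrel
  nlinarith [le_mul_of_one_le_left hpos.le (one_le_pow₀ hs : (1 : ℝ) ≤ s ^ 3)]

end Contraction

def altOrbit {O : Type*} (h η : O → O) (x₀ : O) : ℕ → O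
  | 0 => x₀
  | n + 1 => if Even n then h (altOrbit h η x₀ n) else η (altOrbit h η x₀ n)

section Orbit

variable {O : Type*} {d : O → O → ℝ} {s : ℝ} {R : ℝ → ℝ → Prop} {C D : Set O} {h η : O → O}
  {x₀ : O}

theorem altOrbit_two_mul_add_one (h η : O → O) (x₀ : O) (k : ℕ) :
    altOrbit h η x₀ (2 * k + 1) = h (altOrbit h η x₀ (2 * k)) := by
  rw [altOrbit, if_pos (even_two_mul k)]

theorem altOrbit_two_mul_add_two (h η : O → O) (x₀ : O) (k : ℕ) :
    altOrbit h η x₀ (2 * k + 2) = η (altOrbit h η x₀ (2 * k + 1)) := by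
  rw [altOrbit, if_neg (Nat.not_even_iff_odd.2 (odd_two_mul_add_one k))]

theorem altOrbit_mem (hx₀ : x₀ ∈ C) (hh : MapsTo h C D) (hη : MapsTo η D C) (k : ℕ) :
    altOrbit h η x₀ (2 * k) ∈ C ∧ altOrbit h η x₀ (2 * k + 1) ∈ D := by
  induction k with
  | zero => exact ⟨hx₀, altOrbit_two_mul_add_one h η x₀ 0 ▸ hh hx₀⟩
  | succ k ih =>
    have hC : altOrbit h η x₀ (2 * (k + 1)) ∈ C := altOrbit_two_mul_add_two h η x₀ k ▸ hη ih.2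
    exact ⟨hC, altOrbit_two_mul_add_one h η x₀ (k + 1) ▸ hh hC⟩

theorem exists_step_altOrbit (pb : IsPartialBMetric d s) (hc : IsCyclicContraction d s R C D h η)
    (hx₀ : x₀ ∈ C) (hh : MapsTo h C D) (hη : MapsTo η D C) (n : ℕ) :
    ∃ M, d (altOrbit h η x₀ (n + 1)) (altOrbit h η x₀ (n + 2)) ≤ M ∧
      M ≤ max (d (altOrbit h η x₀ n) (altOrbit h η x₀ (n + 1)))
        (d (altOrbit h η x₀ (n + 1)) (altOrbit h η x₀ (n + 2))) ∧
      R (s ^ 3 * d (altOrbit h η x₀ (n + 1)) (altOrbit h η x₀ (n + 2))) M := by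
  obtain ⟨k, rfl | rfl⟩ := n.even_or_odd'
  · have hC := (altOrbit_mem hx₀ hh hη k).1
    rw [altOrbit_two_mul_add_two, altOrbit_two_mul_add_one]
    exact hc.exists_step pb hC (hh hC)
  · have hD := (altOrbit_mem hx₀ hh hη k).2
    have e₁ : altOrbit h η x₀ (2 * k + 1 + 1) = η (altOrbit h η x₀ (2 * k + 1)) :=
      altOrbit_two_mul_add_two h η x₀ k
    have e₂ : altOrbit h η x₀ (2 * k + 1 + 2) = h (altOrbit h η x₀ (2 * k + 1 + 1)) :=
      altOrbit_two_mul_add_one h η x₀ (k + 1)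
    rw [e₂, e₁]
    exact (hc.symm pb.symm).exists_step pb hD (hη hD)

theorem tendsto_dist_altOrbit_succ (pb : IsPartialBMetric d s) (hR : IsStrictComparison R)
    (hc : IsCyclicContraction d s R C D h η) (hx₀ : x₀ ∈ C) (hh : MapsTo h C D)
    (hη : MapsTo η D C) :
    Tendsto (fun n => d (altOrbit h η x₀ n) (altOrbit h η x₀ (n + 1))) atTop (𝓝 0) :=
  tendsto_zero_of_isStrictComparison hR (one_le_pow₀ pb.one_le) (fun _ => pb.nonneg _ _)
    (exists_step_altOrbit pb hc hx₀ hh hη)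

theorem exists_dist_altOrbit_lt (pb : IsPartialBMetric d s) (hR : IsStrictComparison R)
    (hc : IsCyclicContraction d s R C D h η) (hx₀ : x₀ ∈ C) (hh : MapsTo h C D)
    (hη : MapsTo η D C) {ε : ℝ} (hε : 0 < ε) :
    ∃ K, ∀ n ≥ K, d (altOrbit h η x₀ (2 * K)) (altOrbit h η x₀ (2 * n)) < ε := by
  set x := altOrbit h η x₀
  have hs := pb.one_le
  have hs0 : 0 < s := by linarith
  obtain ⟨c, hc0, hgap⟩ := hR.exists_gap (half_pos hε) (s * ε + 3 * s * ε)
  set θ := min (ε / (4 * s)) (c / (2 * (s ^ 3 + 3 * s)))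
  have hθ0 : 0 < θ := lt_min (by positivity) (by positivity)
  have hθε : 4 * s * θ ≤ ε := (le_div_iff₀' (by positivity)).1 (min_le_left _ _)
  have hθc : 2 * (s ^ 3 + 3 * s) * θ ≤ c := (le_div_iff₀' (by positivity)).1 (min_le_right _ _)
  obtain ⟨K, hK⟩ := eventually_atTop.1 <|
    (tendsto_dist_altOrbit_succ pb hR hc hx₀ hh hη).eventually (gt_mem_nhds hθ0)
  refine ⟨K, fun n hn => ?_⟩
  induction n, hn using Nat.le_induction with
  | base => exact (pb.self_le _ _).trans_lt ((hK _ (by omega)).trans_le (by nlinarith))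
  | succ n hn ih =>
    have hw : d (x (2 * K)) (h (x (2 * K))) < θ :=
      altOrbit_two_mul_add_one h η x₀ K ▸ hK _ (by omega)
    have hv : d (x (2 * n + 1)) (η (x (2 * n + 1))) < θ :=
      altOrbit_two_mul_add_two h η x₀ n ▸ hK _ (by omega)
    have hnext : x (2 * (n + 1)) = η (x (2 * n + 1)) := altOrbit_two_mul_add_two h η x₀ n
    rw [hnext]
    exact hc.dist_lt_of_gap pb hR hε hθε hθc hgap (altOrbit_mem hx₀ hh hη K).1
      (altOrbit_mem hx₀ hh hη n).2 ih hw (hK _ (by omega)) hv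

theorem exists_tendsto_altOrbit (pb : IsPartialBMetric d s) (compl : PBComplete d)
    (hR : IsStrictComparison R) (hc : IsCyclicContraction d s R C D h η) (hx₀ : x₀ ∈ C)
    (hh : MapsTo h C D) (hη : MapsTo η D C) :
    ∃ z, d z z = 0 ∧ Tendsto (fun n => d (altOrbit h η x₀ (2 * n)) z) atTop (𝓝 0) ∧
      Tendsto (fun n => d (altOrbit h η x₀ (2 * n + 1)) z) atTop (𝓝 0) := by
  have hcauchy := pb.tendsto_dist_prod_of_forall (y := fun n => altOrbit h η x₀ (2 * n))
    fun ε hε => exists_dist_altOrbit_lt pb hR hc hx₀ hh hη hε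
  obtain ⟨z, hz, hconv⟩ := compl (fun n => altOrbit h η x₀ (2 * n)) ⟨0, hcauchy⟩
  have hzz : d z z = 0 := tendsto_nhds_unique hz hcauchy
  rw [PBConv, hzz] at hconv
  refine ⟨z, hzz, hconv, pb.tendsto_dist_trans ?_ hconv⟩
  have hdouble : Tendsto (fun n : ℕ => 2 * n) atTop atTop :=
    tendsto_atTop_mono (fun n => Nat.le_mul_of_pos_left n two_pos) tendsto_id
  exact ((tendsto_dist_altOrbit_succ pb hR hc hx₀ hh hη).comp hdouble).congr
    fun n => pb.symm _ _

end Orbit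

theorem stmt13_general {O : Type*} (d : O → O → ℝ) (s : ℝ)
    (pb : IsPartialBMetric d s) (compl : PBComplete d)
    (C D : Set O) (hC : C.Nonempty)
    (hCcl : PBClosed d C) (hDcl : PBClosed d D)
    (h η : O → O)
    (hCsub : h '' C ⊆ D) (ηDsub : η '' D ⊆ C)
    (ξ ω : ℝ → ℝ) (Hc : ℝ → ℝ → ℝ)
    (hξc : ContinuousOn ξ (Ici 0)) (hξm : MonotoneOn ξ (Ici 0))
    (hξnn : ∀ t, 0 ≤ t → 0 ≤ ξ t) (hξ0 : ∀ t, 0 ≤ t → (ξ t = 0 ↔ t = 0))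
    (hωc : ContinuousOn ω (Ici 0)) (hωnn : ∀ t, 0 ≤ t → 0 ≤ ω t)
    (hω : ∀ u : ℕ → ℝ, (∀ n, 0 ≤ u n) →
      Tendsto (fun n => ω (u n)) atTop (𝓝 0) → Tendsto u atTop (𝓝 0))
    (hH : CClassFun Hc)
    (contr : ∀ w ∈ C, ∀ v ∈ D,
      ξ (s ^ 3 * d (h w) (η v)) ≤
        Hc (ξ (PBN d s h η id id w v)) (ω (PBN d s h η id id w v))) :
    ∃ p ∈ C ∩ D, h p = p ∧ η p = p ∧
      ∀ q ∈ C ∪ D, h q = q → η q = q → q = p := by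
  have hω0 (t : ℝ) (ht : 0 ≤ t) (h0 : ω t = 0) : t = 0 :=
    tendsto_nhds_unique tendsto_const_nhds (hω (fun _ => t) (fun _ => ht) (by simp [h0]))
  have hR := isStrictComparison_cClass hξc hξm hξnn hξ0 hωc hωnn hω0 hH
  have hc : IsCyclicContraction d s (fun t N => ξ t ≤ Hc (ξ N) (ω N)) C D h η := contr
  have hh : MapsTo h C D := mapsTo_iff_image_subset.2 hCsub
  have hη : MapsTo η D C := mapsTo_iff_image_subset.2 ηDsub
  obtain ⟨x₀, hx₀⟩ := hC
  have hmem := altOrbit_mem hx₀ hh hη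
  obtain ⟨z, hzz, heven, hodd⟩ := exists_tendsto_altOrbit pb compl hR hc hx₀ hh hη
  have hzC : z ∈ C := hCcl z ⟨_, fun n => (hmem n).1, by rwa [PBConv, hzz]⟩
  have hzD : z ∈ D := hDcl z ⟨_, fun n => (hmem n).2, by rwa [PBConv, hzz]⟩
  have hhz : h z = z := hc.isFixedPt_of_tendsto pb hR hzC (fun n => (hmem n).2) hodd <| by
    simp only [← altOrbit_two_mul_add_two]
    exact heven.comp (tendsto_add_atTop_nat 1)
  have hηz : η z = z := (hc.symm pb.symm).isFixedPt_of_tendsto pb hR hzD (fun n => (hmem n).1)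
    heven (by simpa only [← altOrbit_two_mul_add_one] using hodd)
  refine ⟨z, ⟨hzC, hzD⟩, hhz, hηz, fun q hq hhq hηq => ?_⟩
  have hqC : q ∈ C := hq.elim id fun hqD => hηq ▸ hη hqD
  exact hc.eq_of_isFixedPt pb hR hqC hzD hhq hηz

/-- Common fixed point theorem for a cyclic pair on closed subsets of a
complete partial b-metric space. -/
theorem stmt13 {O : Type*} (d : O → O → ℝ) (s : ℝ)
    (pb : IsPartialBMetric d s) (compl : PBComplete d)
    (C D : Set O) (hC : C.Nonempty) (hD : D.Nonempty)
    (hCcl : PBClosed d C) (hDcl : PBClosed d D) (hCD : (C ∩ D).Nonempty)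
    (h η : O → O)
    (hself : MapsTo h (C ∪ D) (C ∪ D)) (ηself : MapsTo η (C ∪ D) (C ∪ D))
    (hCsub : h '' C ⊆ D) (ηDsub : η '' D ⊆ C)
    (ξ ω : ℝ → ℝ) (Hc : ℝ → ℝ → ℝ)
    (hξc : ContinuousOn ξ (Ici 0)) (hξm : MonotoneOn ξ (Ici 0))
    (hξnn : ∀ t, 0 ≤ t → 0 ≤ ξ t) (hξ0 : ∀ t, 0 ≤ t → (ξ t = 0 ↔ t = 0))
    (hωc : ContinuousOn ω (Ici 0)) (hωnn : ∀ t, 0 ≤ t → 0 ≤ ω t)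
    (hω : ∀ u : ℕ → ℝ, (∀ n, 0 ≤ u n) →
      Tendsto (fun n => ω (u n)) atTop (𝓝 0) → Tendsto u atTop (𝓝 0))
    (hH : CClassFun Hc)
    (contr : ∀ w ∈ C, ∀ v ∈ D,
      ξ (s ^ 3 * d (h w) (η v)) ≤
        Hc (ξ (PBN d s h η id id w v)) (ω (PBN d s h η id id w v))) :
    ∃ p ∈ C ∩ D, h p = p ∧ η p = p ∧
      ∀ q ∈ C ∪ D, h q = q → η q = q → q = p :=
  stmt13_general d s pb compl C D hC hCcl hDcl h η hCsub ηDsub ξ ω Hc hξc hξm hξnn hξ0 hωc hωnn hω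
    hH contr
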